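/- Let f be a holomorphic function of one complex variable defined on a neighborhood of 0 ∈ ℂ with f(0) ≠ 0, and let H(x,y) = ( x(1 + x²y f(x²y)), y(1 + x²y f(x²y))⁻¹ ), a germ of holomorphic diffeomorphism of (ℂ²,0) tangent to the identity. Then the pseudogroup generated by H has finite orbits on a sufficiently small neighborhood of the origin, yet H is not periodic: no iterate Hᴺ with N ≥ 1 coincides with the identity on a neighborhood of the origin; in particular H generates an infinite subgroup of Diff(ℂ²,0). -/

import Mathlib

open Filter Topology

/-- The local map associated to a letter of a word in the generators of a pseudogroup:
`(i, true)` acts by the generator `f i` and `(i, false)` by its (local) inverse `fInv i`. -/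
def letterMap {ι α : Type*} (f fInv : ι → α → α) : ι × Bool → α → α :=
  fun l => if l.2 then f l.1 else fInv l.1

/-- Evaluation of the word `F = F_s ∘ … ∘ F₁` (letters are applied from the left of the
list onwards). -/
def wordEval {ι α : Type*} (f fInv : ι → α → α) : List (ι × Bool) → α → α
  | [], x => x
  | l :: w, x => wordEval f fInv w (letterMap f fInv l x)

/-- `x` belongs to the domain, relative to `V`, of the word `F = F_s ∘ … ∘ F₁` viewed as
an element of the pseudogroup generated on `V`: the point `x` and all its successive
images stay in `V`. -/
def inDom {ι α : Type*} (V : Set α) (f fInv : ι → α → α) : List (ι × Bool) → α → Prop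
  | [], x => x ∈ V
  | l :: w, x => x ∈ V ∧ inDom V f fInv w (letterMap f fInv l x)

/-- The `V`-orbit of `p` under the pseudogroup generated by the `f i`'s and their
inverses `fInv i` on `V`. -/
def pOrbit {ι α : Type*} (V : Set α) (f fInv : ι → α → α) (p : α) : Set α :=
  {q | ∃ w : List (ι × Bool), inDom V f fInv w p ∧ wordEval f fInv w p = q}

/-- The germ of diffeomorphism
`H(x,y) = (x(1 + x²y f(x²y)), y(1 + x²y f(x²y))⁻¹)` of `(ℂ²,0)`. -/
noncomputable def Hmap (f : ℂ → ℂ) : ℂ × ℂ → ℂ × ℂ :=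
  fun p => (p.1 * (1 + p.1 ^ 2 * p.2 * f (p.1 ^ 2 * p.2)),
            p.2 * (1 + p.1 ^ 2 * p.2 * f (p.1 ^ 2 * p.2))⁻¹)


open Set Metric Function

/-! Write `u = x²y` and `a(u) = 1 + u f(u)`, so that `H(x,y) = (x a(u), y / a(u))`. Then `H`
preserves `c = xy`, and one step changes `1/x` by `-c f(u)/a(u)`, which near the origin lies
within `|c f(0)|/2` of `-c f(0)`. Along a trajectory inside a ball of radius `δ`, the quantity
`1/x` therefore drifts linearly, by at least `|c f(0)|/2` per step, while `|1/x| = |y|/|c| < δ/|c|`: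
a trajectory with `c ≠ 0` stays in the ball for at most `4δ/(|f(0)| |c|²)` steps, and points with
`c = 0` are fixed. On `u`, `H` acts as `u ↦ u a(u)`, whose local inverse `ψ` yields the inverse
`(x,y) ↦ (x / a(ψ u), y a(ψ u))` of `H`. A pseudogroup orbit of a single generator consists of
forward and backward trajectories inside the ball, hence is finite. The same drift shows
`H^N p ≠ H^M p` for `N ≠ M` and `p = (t,t)` close to `0`, so the iterates of `H` have pairwise
distinct germs. -/

section Pseudogroup

variable {ι α : Type*} {V R : Set α} {f fInv : ι → α → α} {p : α}

theorem mem_of_inDom : ∀ {w : List (ι × Bool)} {x : α}, inDom V f fInv w x → x ∈ V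
  | [], _, h => h
  | _ :: _, _, h => h.1

theorem pOrbit_subset_of_letterMap_mem (hp : p ∈ R)
    (hR : ∀ l, ∀ q ∈ R, letterMap f fInv l q ∈ V → letterMap f fInv l q ∈ R) :
    pOrbit V f fInv p ⊆ R := by
  have key : ∀ (w : List (ι × Bool)) (q : α), q ∈ R → inDom V f fInv w q →
      wordEval f fInv w q ∈ R := by
    intro w
    induction w with
    | nil => exact fun q hq _ => hq
    | cons l w ih => exact fun q hq hw => ih _ (hR l q hq (mem_of_inDom hw.2)) hw.2
  rintro _ ⟨w, hw, rfl⟩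
  exact key w p hp hw

theorem pOrbit_subset_singleton (hf : ∀ i, f i p = p) (hfInv : ∀ i, fInv i p = p) :
    pOrbit V f fInv p ⊆ {p} := by
  refine pOrbit_subset_of_letterMap_mem rfl ?_
  rintro ⟨i, _ | _⟩ q rfl -
  exacts [hfInv i, hf i]

end Pseudogroup

section OneGenerator

variable {α : Type*} {T S : α → α} {V : Set α} {p q : α}

def chainIterates (T : α → α) (V : Set α) (p : α) : Set α :=
  (fun k => T^[k] p) '' {k | ∀ j ≤ k, T^[j] p ∈ V}

theorem finite_chainIterates {M : ℝ} (h : ∀ k, (∀ j ≤ k, T^[j] p ∈ V) → (k : ℝ) ≤ M) :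
    (chainIterates T V p).Finite := by
  have hbdd : BddAbove {k | ∀ j ≤ k, T^[j] p ∈ V} := ⟨⌊M⌋₊, fun k hk => Nat.le_floor (h k hk)⟩
  exact hbdd.finite.image _

theorem apply_mem_chainIterates_union (hTS : RightInvOn S T V)
    (hq : q ∈ chainIterates T V p ∪ chainIterates S V p) (hTq : T q ∈ V) :
    T q ∈ chainIterates T V p ∪ chainIterates S V p := by
  rcases hq with ⟨k, hk, rfl⟩ | ⟨k, hk, rfl⟩
  · refine Or.inl ⟨k + 1, fun j hj => ?_, iterate_succ_apply' T k p⟩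
    rcases Nat.le_succ_iff.1 hj with hj | rfl
    · exact hk j hj
    · rwa [iterate_succ_apply']
  · cases k with
    | zero =>
      refine Or.inl ⟨1, fun j hj => ?_, rfl⟩
      interval_cases j
      exacts [hk 0 le_rfl, hTq]
    | succ k =>
      refine Or.inr ⟨k, fun j hj => hk j (by omega), ?_⟩
      dsimp only
      rw [iterate_succ_apply', hTS (hk k (by omega))]

theorem pOrbit_subset_chainIterates (h : InvOn S T V V) (hp : p ∈ V) :
    pOrbit V (fun _ : Fin 1 => T) (fun _ => S) p ⊆ chainIterates T V p ∪ chainIterates S V p := by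
  refine pOrbit_subset_of_letterMap_mem (Or.inl ⟨0, by simpa using hp, rfl⟩) ?_
  rintro ⟨i, _ | _⟩ q hq hV
  · rw [union_comm] at hq ⊢
    exact apply_mem_chainIterates_union h.1 hq hV
  · exact apply_mem_chainIterates_union h.2 hq hV

theorem iterate_apply_iterate_of_rightInvOn (hTS : RightInvOn S T V) {k : ℕ}
    (hk : ∀ j ≤ k, S^[j] p ∈ V) : ∀ j ≤ k, T^[j] (S^[k] p) = S^[k - j] p := by
  intro j
  induction j with
  | zero => simp
  | succ j ih =>
    intro hj
    rw [iterate_succ_apply', ih (by omega), show k - j = k - (j + 1) + 1 by omega,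
      iterate_succ_apply', hTS (hk _ (by omega))]

end OneGenerator

theorem mul_norm_div_two_le_norm_sub_of_steps {E : Type*} [NormedAddCommGroup E]
    [NormedSpace ℝ E] (z : ℕ → E) (w : E) (n : ℕ)
    (h : ∀ j < n, ‖z (j + 1) - z j - w‖ ≤ ‖w‖ / 2) : n * ‖w‖ / 2 ≤ ‖z n - z 0‖ := by
  have hsum : z n - z 0 - n • w = ∑ j ∈ Finset.range n, (z (j + 1) - z j - w) := by
    rw [Finset.sum_sub_distrib, Finset.sum_range_sub, Finset.sum_const, Finset.card_range]
  have herr : ‖z n - z 0 - n • w‖ ≤ n * (‖w‖ / 2) :=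
    calc ‖z n - z 0 - n • w‖ ≤ ∑ j ∈ Finset.range n, ‖z (j + 1) - z j - w‖ := by
          rw [hsum]; exact norm_sum_le _ _
      _ ≤ ∑ j ∈ Finset.range n, ‖w‖ / 2 :=
          Finset.sum_le_sum fun j hj => h j (Finset.mem_range.1 hj)
      _ = n * (‖w‖ / 2) := by simp
  have htri := norm_sub_norm_le (n • w) (z n - z 0)
  rw [RCLike.norm_nsmul ℝ, nsmul_eq_mul, norm_sub_rev (n • w)] at htri
  linarith

section Twist

variable {K : Type*} [Field K] {a b : K → K} {p : K × K}

def twistCoord (p : K × K) : K := p.1 ^ 2 * p.2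

def twist (a : K → K) (p : K × K) : K × K :=
  (p.1 * a (twistCoord p), p.2 * (a (twistCoord p))⁻¹)

theorem twist_fst_mul_snd (h : a (twistCoord p) ≠ 0) :
    (twist a p).1 * (twist a p).2 = p.1 * p.2 := by
  simp only [twist]
  field_simp

theorem twistCoord_twist : twistCoord (twist a p) = twistCoord p * a (twistCoord p) := by
  simp only [twist, twistCoord]
  rw [mul_pow, sq (a _), mul_mul_mul_comm, mul_self_mul_inv]

theorem twist_twist (h : b (twistCoord p * a (twistCoord p)) * a (twistCoord p) = 1) :
    twist b (twist a p) = p := by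
  rw [twist, twistCoord_twist]
  ext
  · simp only [twist]
    rw [mul_assoc, mul_comm (a _), h, mul_one]
  · simp only [twist]
    rw [mul_assoc, ← mul_inv, mul_comm (a _), h, inv_one, mul_one]

theorem twist_eq_self (h : a (twistCoord p) = 1) : twist a p = p := by
  simp [twist, h]

theorem continuous_twistCoord [TopologicalSpace K] [IsTopologicalRing K] :
    Continuous (twistCoord : K × K → K) := by
  unfold twistCoord
  fun_prop

theorem tendsto_twistCoord [TopologicalSpace K] [IsTopologicalRing K] :
    Tendsto (twistCoord : K × K → K) (𝓝 0) (𝓝 0) := by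
  simpa [twistCoord] using continuous_twistCoord.tendsto (0 : K × K)

end Twist

theorem Hmap_eq_twist (f : ℂ → ℂ) : Hmap f = twist (fun u => 1 + u * f u) := rfl

section Hmap

variable {f : ℂ → ℂ} {V : Set (ℂ × ℂ)} {p q : ℂ × ℂ} {n : ℕ}

theorem Hmap_zero (f : ℂ → ℂ) : Hmap f 0 = 0 := by
  simp [Hmap]

theorem Hmap_fst_mul_snd (h : 1 + twistCoord p * f (twistCoord p) ≠ 0) :
    (Hmap f p).1 * (Hmap f p).2 = p.1 * p.2 := by
  rw [Hmap_eq_twist]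
  exact twist_fst_mul_snd h

theorem inv_fst_Hmap_sub_inv_fst (hx : p.1 ≠ 0) (ha : 1 + twistCoord p * f (twistCoord p) ≠ 0) :
    (Hmap f p).1⁻¹ - p.1⁻¹ =
      -(p.1 * p.2 * (f (twistCoord p) / (1 + twistCoord p * f (twistCoord p)))) := by
  simp only [Hmap, twistCoord] at ha ⊢
  field_simp
  ring

theorem tendsto_one_add_mul (hf : ContinuousAt f 0) :
    Tendsto (fun u => 1 + u * f u) (𝓝 0) (𝓝 1) := by
  simpa using tendsto_const_nhds.add (tendsto_id.mul hf.tendsto)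

theorem continuousAt_Hmap (hf : ContinuousAt f 0) : ContinuousAt (Hmap f) 0 := by
  have ha := (tendsto_one_add_mul hf).comp tendsto_twistCoord
  rw [ContinuousAt, Hmap_zero]
  convert ((continuous_fst.tendsto 0).mul ha).prodMk_nhds
    ((continuous_snd.tendsto 0).mul (ha.inv₀ one_ne_zero)) using 2
  · rfl
  · simp [Prod.mk_zero_zero]

def IsDriftControlled (f : ℂ → ℂ) (u : ℂ) : Prop :=
  1 + u * f u ≠ 0 ∧ ‖f u / (1 + u * f u) - f 0‖ ≤ ‖f 0‖ / 2

theorem eventually_isDriftControlled (hf : ContinuousAt f 0) (hf0 : f 0 ≠ 0) :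
    ∀ᶠ u in 𝓝 0, IsDriftControlled f u := by
  have ha := tendsto_one_add_mul hf
  have hq : Tendsto (fun u => f u / (1 + u * f u)) (𝓝 0) (𝓝 (f 0)) := by
    simpa [Pi.div_def] using hf.tendsto.div ha one_ne_zero
  filter_upwards [ha.eventually_ne one_ne_zero,
    hq.eventually (closedBall_mem_nhds _ (half_pos (norm_pos_iff.2 hf0)))] with u h1 h2
  exact ⟨h1, by rwa [dist_eq_norm] at h2⟩

theorem fst_mul_snd_iterate_Hmap (hV : MapsTo twistCoord V {u | IsDriftControlled f u})
    (hchain : ∀ j < n, (Hmap f)^[j] q ∈ V) :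
    ((Hmap f)^[n] q).1 * ((Hmap f)^[n] q).2 = q.1 * q.2 := by
  induction n with
  | zero => rfl
  | succ n ih =>
    rw [iterate_succ_apply', Hmap_fst_mul_snd (hV (hchain n n.lt_succ_self)).1,
      ih fun j hj => hchain j (by omega)]

theorem mul_norm_div_two_le_norm_inv_fst_sub
    (hV : MapsTo twistCoord V {u | IsDriftControlled f u}) (hc : q.1 * q.2 ≠ 0)
    (hchain : ∀ j < n, (Hmap f)^[j] q ∈ V) :
    n * ‖q.1 * q.2 * f 0‖ / 2 ≤ ‖((Hmap f)^[n] q).1⁻¹ - q.1⁻¹‖ := by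
  rw [← norm_neg (q.1 * q.2 * f 0)]
  refine mul_norm_div_two_le_norm_sub_of_steps (fun j => ((Hmap f)^[j] q).1⁻¹) _ n
    fun j hj => ?_
  have hr : ((Hmap f)^[j] q).1 * ((Hmap f)^[j] q).2 = q.1 * q.2 :=
    fst_mul_snd_iterate_Hmap hV fun i hi => hchain i (by omega)
  obtain ⟨ha, hest⟩ := hV (hchain j hj)
  rw [iterate_succ_apply', inv_fst_Hmap_sub_inv_fst (left_ne_zero_of_mul (hr ▸ hc)) ha, hr]
  set c := q.1 * q.2
  set u := twistCoord ((Hmap f)^[j] q)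
  calc ‖-(c * (f u / (1 + u * f u))) - -(c * f 0)‖ = ‖c‖ * ‖f u / (1 + u * f u) - f 0‖ := by
        rw [← norm_mul, ← norm_neg]; ring_nf
    _ ≤ ‖c‖ * (‖f 0‖ / 2) := by gcongr
    _ = ‖-(c * f 0)‖ / 2 := by rw [norm_neg, norm_mul c]; ring

theorem fst_iterate_Hmap_ne (hV : MapsTo twistCoord V {u | IsDriftControlled f u})
    (hf0 : f 0 ≠ 0) (hc : q.1 * q.2 ≠ 0) (hn : n ≠ 0) (hchain : ∀ j < n, (Hmap f)^[j] q ∈ V) :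
    ((Hmap f)^[n] q).1 ≠ q.1 := by
  intro h
  have hdrift := mul_norm_div_two_le_norm_inv_fst_sub hV hc hchain
  rw [h, sub_self, norm_zero] at hdrift
  have : 0 < (n : ℝ) * ‖q.1 * q.2 * f 0‖ / 2 := by
    have := norm_pos_iff.2 (mul_ne_zero hc hf0)
    positivity
  linarith

theorem chain_length_le (hV : MapsTo twistCoord V {u | IsDriftControlled f u}) {δ : ℝ}
    (hδ : ∀ p ∈ V, ‖p.2‖ ≤ δ) (hf0 : f 0 ≠ 0) {c : ℂ} (hc : q.1 * q.2 = c) (hc0 : c ≠ 0)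
    (hchain : ∀ j ≤ n, (Hmap f)^[j] q ∈ V) :
    (n : ℝ) ≤ 4 * δ / (‖f 0‖ * ‖c‖ ^ 2) := by
  have hinv : ∀ j ≤ n, ‖((Hmap f)^[j] q).1⁻¹‖ ≤ δ / ‖c‖ := by
    intro j hj
    have hr : ((Hmap f)^[j] q).1 * ((Hmap f)^[j] q).2 = c :=
      (fst_mul_snd_iterate_Hmap hV fun i hi => hchain i (by omega)).trans hc
    rw [inv_eq_of_mul_eq_one_right (b := ((Hmap f)^[j] q).2 / c)
      (by rw [← mul_div_assoc, hr, div_self hc0]), norm_div]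
    gcongr
    exact hδ _ (hchain j hj)
  have hdrift := mul_norm_div_two_le_norm_inv_fst_sub hV (hc ▸ hc0) fun j hj => hchain j hj.le
  have hdist : ‖((Hmap f)^[n] q).1⁻¹ - q.1⁻¹‖ ≤ δ / ‖c‖ + δ / ‖c‖ :=
    (norm_sub_le _ _).trans (add_le_add (hinv n le_rfl) (hinv 0 n.zero_le))
  rw [hc, norm_mul] at hdrift
  have hcpos := norm_pos_iff.2 hc0
  have hlhs : (n : ℝ) * (‖f 0‖ * ‖c‖ ^ 2) = n * (‖c‖ * ‖f 0‖) / 2 * (2 * ‖c‖) := by ring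
  have hrhs : (δ / ‖c‖ + δ / ‖c‖) * (2 * ‖c‖) = 4 * δ := by field_simp; ring
  rw [le_div_iff₀ (by positivity), hlhs, ← hrhs]
  exact mul_le_mul_of_nonneg_right (hdrift.trans hdist) (by positivity)

theorem inverse_chain_length_le {S : ℂ × ℂ → ℂ × ℂ} (hTS : RightInvOn S (Hmap f) V)
    (hV : MapsTo twistCoord V {u | IsDriftControlled f u}) {δ : ℝ} (hδ : ∀ p ∈ V, ‖p.2‖ ≤ δ)
    (hf0 : f 0 ≠ 0) (hc : p.1 * p.2 ≠ 0) (hchain : ∀ j ≤ n, S^[j] p ∈ V) :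
    (n : ℝ) ≤ 4 * δ / (‖f 0‖ * ‖p.1 * p.2‖ ^ 2) := by
  have hback := iterate_apply_iterate_of_rightInvOn hTS hchain
  have hchain' : ∀ j ≤ n, (Hmap f)^[j] (S^[n] p) ∈ V :=
    fun j hj => (hback j hj) ▸ hchain _ (Nat.sub_le _ _)
  have hcS : (S^[n] p).1 * (S^[n] p).2 = p.1 * p.2 := by
    have := fst_mul_snd_iterate_Hmap hV fun j hj => hchain' j hj.le
    rwa [hback n le_rfl, Nat.sub_self, iterate_zero_apply, eq_comm] at this
  exact chain_length_le hV hδ hf0 hcS hc hchain'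

theorem pOrbit_Hmap_finite {S : ℂ × ℂ → ℂ × ℂ} (hinv : InvOn S (Hmap f) V V)
    (hV : MapsTo twistCoord V {u | IsDriftControlled f u}) {δ : ℝ} (hδ : ∀ p ∈ V, ‖p.2‖ ≤ δ)
    (hf0 : f 0 ≠ 0) (hp : p ∈ V) :
    (pOrbit V (fun _ : Fin 1 => Hmap f) (fun _ => S) p).Finite := by
  by_cases hc : p.1 * p.2 = 0
  · have hT : Hmap f p = p := by
      rw [Hmap_eq_twist]
      exact twist_eq_self (by simp [twistCoord, pow_two, mul_assoc, hc])
    have hS : S p = p := by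
      conv_lhs => rw [← hT]
      exact hinv.1 hp
    exact (finite_singleton p).subset (pOrbit_subset_singleton (fun _ => hT) fun _ => hS)
  have hfwd := finite_chainIterates fun _ => chain_length_le hV hδ hf0 rfl hc
  have hbwd := finite_chainIterates fun _ => inverse_chain_length_le hinv.2 hV hδ hf0 hc
  exact (hfwd.union hbwd).subset (pOrbit_subset_chainIterates hinv hp)

end Hmap

theorem exists_eventually_inverse_Hmap {f : ℂ → ℂ} (hf : AnalyticAt ℂ f 0) :
    ∃ S : ℂ × ℂ → ℂ × ℂ, ∀ᶠ p in 𝓝 0, S (Hmap f p) = p ∧ Hmap f (S p) = p := by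
  set a : ℂ → ℂ := fun u => 1 + u * f u
  have hφ : HasStrictDerivAt (fun u => u * a u) 1 0 := by
    have ha : AnalyticAt ℂ a 0 := analyticAt_const.add (analyticAt_id.mul hf)
    have h := (hasStrictDerivAt_id (0 : ℂ)).mul ha.hasStrictDerivAt
    rw [show (1 : ℂ) * a 0 + id 0 * deriv a 0 = 1 by simp [a]] at h
    exact h
  set ψ := hφ.localInverse _ _ _ one_ne_zero
  have hleft : ∀ᶠ u in 𝓝 0, ψ (u * a u) = u := hφ.eventually_left_inverse one_ne_zero
  have hright : ∀ᶠ v in 𝓝 0, ψ v * a (ψ v) = v := by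
    simpa using hφ.eventually_right_inverse one_ne_zero
  have hψ : Tendsto ψ (𝓝 0) (𝓝 0) := by
    have hc : ContinuousAt ψ (0 * a 0) :=
      (hφ.hasStrictFDerivAt_equiv one_ne_zero).localInverse_continuousAt
    have h0 : ψ 0 = 0 := by simpa using hleft.self_of_nhds
    simpa [h0] using hc.tendsto
  have ha0 : ∀ᶠ u in 𝓝 0, a u ≠ 0 :=
    (tendsto_one_add_mul hf.continuousAt).eventually_ne one_ne_zero
  refine ⟨twist fun v => (a (ψ v))⁻¹, ?_⟩
  rw [Hmap_eq_twist]
  filter_upwards [tendsto_twistCoord.eventually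
    (hleft.and (hright.and (ha0.and (hψ.eventually ha0))))] with p ⟨hl, hr, hp0, hψ0⟩
  refine ⟨twist_twist ?_, twist_twist ?_⟩
  · rw [hl, inv_mul_cancel₀ hp0]
  · have hu : twistCoord p * (a (ψ (twistCoord p)))⁻¹ = ψ (twistCoord p) := by
      rw [mul_inv_eq_iff_eq_mul₀ hψ0, hr]
    rw [hu, mul_inv_cancel₀ hψ0]

theorem eventually_forall_le_iterate_mem {X : Type*} [TopologicalSpace X] {T : X → X} {x : X}
    (hT : ContinuousAt T x) (hx : T x = x) {V : Set X} (hV : V ∈ 𝓝 x) (N : ℕ) :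
    ∀ᶠ p in 𝓝 x, ∀ j ≤ N, T^[j] p ∈ V :=
  (eventually_all_finite (finite_Iic N)).2 fun j _ =>
    (hT.iterate hx j).preimage_mem_nhds (by rwa [iterate_fixed hx])

theorem injective_germ_iterate_Hmap {f : ℂ → ℂ} (hf : ContinuousAt f 0) (hf0 : f 0 ≠ 0) :
    Injective fun N : ℕ => (Germ.ofFun ((Hmap f)^[N]) : Germ (𝓝 (0 : ℂ × ℂ)) (ℂ × ℂ)) := by
  refine Injective.of_lt_imp_ne fun M N hMN hgerm => ?_
  set V := {p : ℂ × ℂ | IsDriftControlled f (twistCoord p)}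
  have hV : MapsTo twistCoord V {u | IsDriftControlled f u} := fun _ hp => hp
  have hnear : ∀ᶠ p in 𝓝 (0 : ℂ × ℂ),
      (Hmap f)^[M] p = (Hmap f)^[N] p ∧ ∀ j ≤ N, (Hmap f)^[j] p ∈ V :=
    (Germ.coe_eq.1 hgerm).and <| eventually_forall_le_iterate_mem (continuousAt_Hmap hf)
      (Hmap_zero f) (tendsto_twistCoord.eventually (eventually_isDriftControlled hf hf0)) N
  have hdiag : Tendsto (fun t : ℂ => (t, t)) (𝓝[≠] 0) (𝓝 0) :=
    tendsto_nhdsWithin_of_tendsto_nhds ((continuous_id.prodMk continuous_id).tendsto' 0 0 rfl)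
  obtain ⟨t, ⟨hMN', hchain⟩, ht⟩ := ((hdiag.eventually hnear).and self_mem_nhdsWithin).exists
  set q := (Hmap f)^[M] (t, t)
  have hc : q.1 * q.2 ≠ 0 := by
    rw [fst_mul_snd_iterate_Hmap hV fun j hj => hchain j (by omega)]
    exact mul_ne_zero ht ht
  refine fst_iterate_Hmap_ne hV hf0 hc (by omega : N - M ≠ 0) (fun j hj => ?_) ?_
  · rw [← iterate_add_apply]
    exact hchain _ (by omega)
  · rw [← iterate_add_apply, Nat.sub_add_cancel hMN.le, ← hMN']

/-- For `f` holomorphic near `0 ∈ ℂ` with `f 0 ≠ 0`, the germ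
`H(x,y) = (x(1 + x²y f(x²y)), y(1 + x²y f(x²y))⁻¹)`, tangent to the identity, generates
a pseudogroup with finite orbits on a sufficiently small neighborhood of the origin,
while `H` is not periodic (no iterate `H^N`, `N ≥ 1`, is the identity near the origin);
in particular `H` generates an infinite subgroup of `Diff(ℂ²,0)` (the germs of the
iterates of `H` are infinitely many). -/
theorem finite_orbits_not_periodic (f : ℂ → ℂ) (U : Set ℂ)
    (hU : U ∈ 𝓝 (0 : ℂ)) (hf : DifferentiableOn ℂ f U) (hf0 : f 0 ≠ 0) :
    (∃ V ∈ 𝓝 (0 : ℂ × ℂ), ∃ HInv : ℂ × ℂ → ℂ × ℂ,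
      (∀ p ∈ V, HInv (Hmap f p) = p ∧ Hmap f (HInv p) = p) ∧
      ∀ p ∈ V, (pOrbit V (fun _ : Fin 1 => Hmap f) (fun _ => HInv) p).Finite)
    ∧ (∀ N : ℕ, 1 ≤ N → ¬ ((Hmap f)^[N] =ᶠ[𝓝 (0 : ℂ × ℂ)] id))
    ∧ Set.Infinite (Set.range fun N : ℕ =>
        (Filter.Germ.ofFun ((Hmap f)^[N]) : Filter.Germ (𝓝 (0 : ℂ × ℂ)) (ℂ × ℂ))) := by
  have hfa : AnalyticAt ℂ f 0 := hf.analyticAt hU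
  have hinj := injective_germ_iterate_Hmap hfa.continuousAt hf0
  obtain ⟨S, hS⟩ := exists_eventually_inverse_Hmap hfa
  obtain ⟨δ, hδ, hball⟩ := Metric.mem_nhds_iff.1 (hS.and (tendsto_twistCoord.eventually
    (eventually_isDriftControlled hfa.continuousAt hf0)))
  have hinv : InvOn S (Hmap f) (ball 0 δ) (ball 0 δ) :=
    ⟨fun p hp => (hball hp).1.1, fun p hp => (hball hp).1.2⟩
  have hy : ∀ p ∈ ball (0 : ℂ × ℂ) δ, ‖p.2‖ ≤ δ :=
    fun p hp => (norm_snd_le p).trans (mem_ball_zero_iff.1 hp).le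
  refine ⟨⟨ball 0 δ, ball_mem_nhds 0 hδ, S, fun p hp => (hball hp).1,
    fun p hp => pOrbit_Hmap_finite hinv (fun p hp => (hball hp).2) hy hf0 hp⟩,
    fun N hN hid => ?_, infinite_range_of_injective hinj⟩
  have := hinj (a₁ := N) (a₂ := 0) (Germ.coe_eq.2 hid)
  omega
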